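/- (Proposition 2.2 (iv): spectral gap / coercivity.) For every f ∈ L²_M, setting N_s = ∑' n, ∫ p, f n p, one has −⟨Q f, f⟩_M ≥ α₁ * ∑' n, ∫ p, (f n p − N_s * M n p)^2 / M n p. In particular ⟨Q f, f⟩_M ≤ 0, i.e. Q is a negative operator on L²_M. -/

import Mathlib

/-!
Symmetry of the cross-section turns `⟨Q f, f⟩_M` into minus the Dirichlet form
`½ ∬ α M M' (f/M - f'/M')²`. Since `α ≥ α₁`, this dominates `α₁` times the same form with
`α ≡ 1`, which by Fubini equals `‖f‖²_M ∫ M - (∫ f)² = ‖f - N_s M‖²_M` once `∫ M = 1`.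
Band index and momentum are merged into one variable of `ℕ × ℝ` with counting ⊗ Lebesgue measure,
so that `∑' n, ∫ p` becomes a single integral.
-/

open MeasureTheory Real

lemma abs_le_half_sq_div_add {y m : ℝ} (hm : 0 < m) : |y| ≤ (y ^ 2 / m + m) / 2 := by
  have h : (y ^ 2 / m + m) / 2 - |y| = (|y| - m) ^ 2 / (2 * m) := by
    field_simp
    linear_combination -(sq_abs y)
  linarith [h, (by positivity : 0 ≤ (|y| - m) ^ 2 / (2 * m))]

lemma mul_weighted_sq_sub_eq {a m m' y y' : ℝ} (hm : m ≠ 0) (hm' : m' ≠ 0) :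
    a * (m * m' * (y / m - y' / m') ^ 2) =
      a * (y ^ 2 / m * m') + a * (m * (y' ^ 2 / m')) - 2 * (a * (y * y')) := by
  field_simp
  ring

section WeightedL2

variable {X : Type*} [MeasurableSpace X] {μ : Measure X} {M f : X → ℝ}

theorem integrable_of_integrable_sq_div (hM : ∀ x, 0 < M x) (hMi : Integrable M μ)
    (hf : AEStronglyMeasurable f μ) (hf2 : Integrable (fun x => f x ^ 2 / M x) μ) :
    Integrable f μ :=
  ((hf2.add hMi).div_const 2).mono' hf <| ae_of_all _ fun x => abs_le_half_sq_div_add (hM x)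

lemma sq_sub_mul_div_eq {y m : ℝ} (c : ℝ) (hm : m ≠ 0) :
    (y - c * m) ^ 2 / m = y ^ 2 / m - 2 * c * y + c ^ 2 * m := by
  field_simp
  ring

theorem integrable_sq_sub_mul_div (hM : ∀ x, M x ≠ 0) (hMi : Integrable M μ)
    (hfi : Integrable f μ) (hf2 : Integrable (fun x => f x ^ 2 / M x) μ) (c : ℝ) :
    Integrable (fun x => (f x - c * M x) ^ 2 / M x) μ := by
  simp only [sq_sub_mul_div_eq c (hM _)]
  exact (hf2.sub (hfi.const_mul _)).add (hMi.const_mul _)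

theorem integral_sq_sub_mul_div (hM : ∀ x, M x ≠ 0) (hMi : Integrable M μ)
    (hfi : Integrable f μ) (hf2 : Integrable (fun x => f x ^ 2 / M x) μ) (c : ℝ) :
    ∫ x, (f x - c * M x) ^ 2 / M x ∂μ =
      ∫ x, f x ^ 2 / M x ∂μ - 2 * c * ∫ x, f x ∂μ + c ^ 2 * ∫ x, M x ∂μ := by
  have hfc : Integrable (fun x => 2 * c * f x) μ := hfi.const_mul _
  have hdiff : Integrable (fun x => f x ^ 2 / M x - 2 * c * f x) μ := hf2.sub hfc
  simp only [sq_sub_mul_div_eq c (hM _)]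
  rw [integral_add hdiff (hMi.const_mul _), integral_sub hf2 hfc, integral_const_mul,
    integral_const_mul]

end WeightedL2

section Collision

variable {X : Type*} [MeasurableSpace X] {μ : Measure X} {a : X → X → ℝ} {C : ℝ} {M f : X → ℝ}

noncomputable def collisionOperator (μ : Measure X) (a : X → X → ℝ) (M f : X → ℝ) (x : X) : ℝ :=
  ∫ y, a x y * (M x * f y - M y * f x) ∂μ

noncomputable def dirichletForm (μ : Measure X) (a : X → X → ℝ) (M f : X → ℝ) : ℝ :=
  (∫ z, a z.1 z.2 * (M z.1 * M z.2 * (f z.1 / M z.1 - f z.2 / M z.2) ^ 2) ∂μ.prod μ) / 2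

lemma integrable_collision_integrand (ha : Measurable (Function.uncurry a))
    (ha_bdd : ∀ x y, ‖a x y‖ ≤ C) (hMi : Integrable M μ) (hfi : Integrable f μ) (x : X) :
    Integrable (fun y => a x y * (M x * f y - M y * f x)) μ :=
  ((hfi.const_mul (M x)).sub (hMi.mul_const (f x))).bdd_mul
    (ha.comp measurable_prodMk_left).aestronglyMeasurable (ae_of_all _ (ha_bdd x))

lemma integrable_kernel_mul_prod [SFinite μ] (ha : Measurable (Function.uncurry a))
    (ha_bdd : ∀ x y, ‖a x y‖ ≤ C) {g h : X → ℝ} (hg : Integrable g μ) (hh : Integrable h μ) :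
    Integrable (fun z : X × X => a z.1 z.2 * (g z.1 * h z.2)) (μ.prod μ) :=
  (hg.mul_prod hh).bdd_mul ha.aestronglyMeasurable (ae_of_all _ fun z => ha_bdd z.1 z.2)

lemma collisionOperator_mul_div_eq_integral (hM : ∀ x, M x ≠ 0) (x : X) :
    collisionOperator μ a M f x * f x / M x =
      ∫ y, (a x y * (f x * f y) - a x y * (f x ^ 2 / M x * M y)) ∂μ := by
  rw [collisionOperator, mul_div_assoc, ← integral_mul_const]
  congr 1
  funext y
  field_simp [hM x]

theorem integrable_collisionOperator_mul_div [SFinite μ] (ha : Measurable (Function.uncurry a))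
    (ha_bdd : ∀ x y, ‖a x y‖ ≤ C) (hM : ∀ x, M x ≠ 0) (hMi : Integrable M μ)
    (hfi : Integrable f μ) (hf2 : Integrable (fun x => f x ^ 2 / M x) μ) :
    Integrable (fun x => collisionOperator μ a M f x * f x / M x) μ := by
  simp only [collisionOperator_mul_div_eq_integral hM]
  exact ((integrable_kernel_mul_prod ha ha_bdd hfi hfi).sub
    (integrable_kernel_mul_prod ha ha_bdd hf2 hMi)).integral_prod_left

theorem integral_collisionOperator_mul_div [SFinite μ] (ha : Measurable (Function.uncurry a))
    (ha_bdd : ∀ x y, ‖a x y‖ ≤ C) (hM : ∀ x, M x ≠ 0) (hMi : Integrable M μ)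
    (hfi : Integrable f μ) (hf2 : Integrable (fun x => f x ^ 2 / M x) μ) :
    ∫ x, collisionOperator μ a M f x * f x / M x ∂μ =
      ∫ z, a z.1 z.2 * (f z.1 * f z.2) ∂μ.prod μ -
        ∫ z, a z.1 z.2 * (f z.1 ^ 2 / M z.1 * M z.2) ∂μ.prod μ := by
  have h1 := integrable_kernel_mul_prod ha ha_bdd hfi hfi
  have h2 := integrable_kernel_mul_prod ha ha_bdd hf2 hMi
  simp only [collisionOperator_mul_div_eq_integral hM]
  rw [← integral_sub h1 h2]
  exact (integral_prod _ (h1.sub h2)).symm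

theorem integrable_dirichletForm_integrand [SFinite μ] (ha : Measurable (Function.uncurry a))
    (ha_bdd : ∀ x y, ‖a x y‖ ≤ C) (hM : ∀ x, M x ≠ 0) (hMi : Integrable M μ)
    (hfi : Integrable f μ) (hf2 : Integrable (fun x => f x ^ 2 / M x) μ) :
    Integrable (fun z : X × X =>
      a z.1 z.2 * (M z.1 * M z.2 * (f z.1 / M z.1 - f z.2 / M z.2) ^ 2)) (μ.prod μ) := by
  simp only [mul_weighted_sq_sub_eq (hM _) (hM _)]
  exact ((integrable_kernel_mul_prod ha ha_bdd hf2 hMi).add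
    (integrable_kernel_mul_prod ha ha_bdd hMi hf2)).sub
      ((integrable_kernel_mul_prod ha ha_bdd hfi hfi).const_mul 2)

theorem dirichletForm_eq [SFinite μ] (ha : Measurable (Function.uncurry a))
    (ha_bdd : ∀ x y, ‖a x y‖ ≤ C) (hsym : ∀ x y, a x y = a y x) (hM : ∀ x, M x ≠ 0)
    (hMi : Integrable M μ) (hfi : Integrable f μ)
    (hf2 : Integrable (fun x => f x ^ 2 / M x) μ) :
    dirichletForm μ a M f =
      ∫ z, a z.1 z.2 * (f z.1 ^ 2 / M z.1 * M z.2) ∂μ.prod μ -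
        ∫ z, a z.1 z.2 * (f z.1 * f z.2) ∂μ.prod μ := by
  have h1 := integrable_kernel_mul_prod ha ha_bdd hfi hfi
  have h2 := integrable_kernel_mul_prod ha ha_bdd hf2 hMi
  have h3 := integrable_kernel_mul_prod ha ha_bdd hMi hf2
  have hswap : ∫ z, a z.1 z.2 * (M z.1 * (f z.2 ^ 2 / M z.2)) ∂μ.prod μ =
      ∫ z, a z.1 z.2 * (f z.1 ^ 2 / M z.1 * M z.2) ∂μ.prod μ := by
    rw [← integral_prod_swap]
    simp only [Prod.fst_swap, Prod.snd_swap, hsym _ _, mul_comm (M _)]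
  have h23 : Integrable (fun z : X × X => a z.1 z.2 * (f z.1 ^ 2 / M z.1 * M z.2) +
      a z.1 z.2 * (M z.1 * (f z.2 ^ 2 / M z.2))) (μ.prod μ) := h2.add h3
  have h1' : Integrable (fun z : X × X => 2 * (a z.1 z.2 * (f z.1 * f z.2))) (μ.prod μ) :=
    h1.const_mul 2
  rw [dirichletForm]
  simp only [mul_weighted_sq_sub_eq (hM _) (hM _)]
  rw [integral_sub h23 h1', integral_add h2 h3, integral_const_mul, hswap]
  ring

theorem integral_collisionOperator_mul_div_eq_neg_dirichletForm [SFinite μ]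
    (ha : Measurable (Function.uncurry a)) (ha_bdd : ∀ x y, ‖a x y‖ ≤ C)
    (hsym : ∀ x y, a x y = a y x) (hM : ∀ x, M x ≠ 0) (hMi : Integrable M μ)
    (hfi : Integrable f μ) (hf2 : Integrable (fun x => f x ^ 2 / M x) μ) :
    ∫ x, collisionOperator μ a M f x * f x / M x ∂μ = -dirichletForm μ a M f := by
  rw [integral_collisionOperator_mul_div ha ha_bdd hM hMi hfi hf2,
    dirichletForm_eq ha ha_bdd hsym hM hMi hfi hf2, neg_sub]

theorem dirichletForm_one [SFinite μ] (hM : ∀ x, M x ≠ 0) (hMi : Integrable M μ)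
    (hfi : Integrable f μ) (hf2 : Integrable (fun x => f x ^ 2 / M x) μ) :
    dirichletForm μ (fun _ _ => 1) M f =
      (∫ x, f x ^ 2 / M x ∂μ) * (∫ x, M x ∂μ) - (∫ x, f x ∂μ) ^ 2 := by
  rw [dirichletForm_eq measurable_const (C := 1) (fun _ _ => norm_one.le) (fun _ _ => rfl)
    hM hMi hfi hf2]
  simp only [one_mul]
  rw [integral_prod_mul f f, integral_prod_mul (fun x => f x ^ 2 / M x) M, sq]

theorem mul_dirichletForm_one_le [SFinite μ] (ha : Measurable (Function.uncurry a))
    (ha_bdd : ∀ x y, ‖a x y‖ ≤ C) {c : ℝ} (ha_ge : ∀ x y, c ≤ a x y) (hM : ∀ x, 0 < M x)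
    (hMi : Integrable M μ) (hfi : Integrable f μ)
    (hf2 : Integrable (fun x => f x ^ 2 / M x) μ) :
    c * dirichletForm μ (fun _ _ => 1) M f ≤ dirichletForm μ a M f := by
  have hM' : ∀ x, M x ≠ 0 := fun x => (hM x).ne'
  have h1 := integrable_dirichletForm_integrand (a := fun _ _ => 1) measurable_const (C := 1)
    (fun _ _ => norm_one.le) hM' hMi hfi hf2
  have ha' := integrable_dirichletForm_integrand ha ha_bdd hM' hMi hfi hf2
  rw [dirichletForm, dirichletForm, ← mul_div_assoc, ← integral_const_mul]
  refine div_le_div_of_nonneg_right (integral_mono (h1.const_mul c) ha' fun z => ?_) two_pos.le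
  have := hM z.1
  have := hM z.2
  simp only [one_mul]
  gcongr
  exact ha_ge _ _

theorem mul_integral_sq_sub_div_le_neg_integral_collisionOperator [SFinite μ]
    (ha : Measurable (Function.uncurry a)) (ha_bdd : ∀ x y, ‖a x y‖ ≤ C)
    (hsym : ∀ x y, a x y = a y x) {c : ℝ} (ha_ge : ∀ x y, c ≤ a x y) (hM : ∀ x, 0 < M x)
    (hMi : Integrable M μ) (hM1 : ∫ x, M x ∂μ = 1) (hfi : Integrable f μ)
    (hf2 : Integrable (fun x => f x ^ 2 / M x) μ) :
    c * ∫ x, (f x - (∫ y, f y ∂μ) * M x) ^ 2 / M x ∂μ ≤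
      -∫ x, collisionOperator μ a M f x * f x / M x ∂μ := by
  have hM' : ∀ x, M x ≠ 0 := fun x => (hM x).ne'
  rw [integral_collisionOperator_mul_div_eq_neg_dirichletForm ha ha_bdd hsym hM' hMi hfi hf2,
    neg_neg, integral_sq_sub_mul_div hM' hMi hfi hf2]
  calc c * _ = c * dirichletForm μ (fun _ _ => 1) M f := by
        rw [dirichletForm_one hM' hMi hfi hf2, hM1]
        ring
    _ ≤ dirichletForm μ a M f := mul_dirichletForm_one_le ha ha_bdd ha_ge hM hMi hfi hf2

end Collision

section CountableProd

variable {ι Y : Type*} [MeasurableSpace ι] [MeasurableSingletonClass ι] [MeasurableSpace Y]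
  {ν : Measure Y} [SFinite ν]

theorem integral_count_prod [Countable ι] {h : ι × Y → ℝ}
    (hh : Integrable h (Measure.count.prod ν)) :
    ∫ z, h z ∂(Measure.count.prod ν) = ∑' i, ∫ y, h (i, y) ∂ν := by
  rw [integral_prod _ hh, integral_countable hh.integral_prod_left]
  simp only [Measure.real, MeasurableSet.singleton, Measure.count_singleton', ENNReal.toReal_one,
    one_smul]

theorem integrable_count_prod_of_nonneg [Countable ι] {h : ι → Y → ℝ}
    (hm : ∀ i, Measurable (h i)) (h0 : ∀ i y, 0 ≤ h i y) (hi : ∀ i, Integrable (h i) ν)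
    (hs : Summable fun i => ∫ y, h i y ∂ν) :
    Integrable (Function.uncurry h) (Measure.count.prod ν) := by
  rw [integrable_prod_iff (measurable_from_prod_countable_right hm).aestronglyMeasurable,
    integrable_count_iff]
  refine ⟨ae_of_all _ hi, hs.congr fun i => ?_⟩
  simp only [Function.uncurry_apply_pair, Real.norm_of_nonneg (h0 _ _),
    Real.norm_of_nonneg (integral_nonneg (h0 i))]

theorem measurable_reindex_kernel [Countable ι] {k : ι → ι → Y → Y → ℝ}
    (hk : ∀ i j, Measurable fun q : Y × Y => k i j q.1 q.2) :
    Measurable fun z : (ι × Y) × ι × Y => k z.1.1 z.2.1 z.1.2 z.2.2 := by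
  have : Measurable fun w : (ι × ι) × Y × Y => k w.1.1 w.1.2 w.2.1 w.2.2 :=
    measurable_from_prod_countable_right fun ij => hk ij.1 ij.2
  exact this.comp (f := fun z : (ι × Y) × ι × Y => ((z.1.1, z.2.1), (z.1.2, z.2.2))) (by fun_prop)

theorem mul_tsum_integral_sq_sub_div_le_neg_tsum_collision [Countable ι]
    {k : ι → ι → Y → Y → ℝ} {c C : ℝ}
    (hk : ∀ i j, Measurable fun q : Y × Y => k i j q.1 q.2)
    (hk_sym : ∀ i j y y', k i j y y' = k j i y' y) (hk_bdd : ∀ i j y y', ‖k i j y y'‖ ≤ C)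
    (hk_ge : ∀ i j y y', c ≤ k i j y y') {M f : ι → Y → ℝ} (hM : ∀ i y, 0 < M i y)
    (hMm : ∀ i, Measurable (M i)) (hMi : ∀ i, Integrable (M i) ν)
    (hM1 : ∑' i, ∫ y, M i y ∂ν = 1) (hfm : ∀ i, Measurable (f i))
    (hf2 : ∀ i, Integrable (fun y => f i y ^ 2 / M i y) ν)
    (hf2sum : Summable fun i => ∫ y, f i y ^ 2 / M i y ∂ν) :
    c * ∑' i, ∫ y, (f i y - (∑' j, ∫ y', f j y' ∂ν) * M i y) ^ 2 / M i y ∂ν ≤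
      -∑' i, ∫ y, (∑' j, ∫ y', k i j y y' * (M i y * f j y' - M j y' * f i y) ∂ν) *
        f i y / M i y ∂ν := by
  set a : ι × Y → ι × Y → ℝ := fun x x' => k x.1 x'.1 x.2 x'.2
  have ha : Measurable (Function.uncurry a) := measurable_reindex_kernel hk
  have hMsum : Summable fun i => ∫ y, M i y ∂ν := by
    -- a non-summable family would have `∑' = 0`
    by_contra h
    simp [tsum_eq_zero_of_not_summable h] at hM1
  have ha_bdd : ∀ x x', ‖a x x'‖ ≤ C := fun x x' => hk_bdd _ _ _ _
  have hM' : ∀ x : ι × Y, Function.uncurry M x ≠ 0 := fun x => (hM _ _).ne'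
  have hMi' : Integrable (Function.uncurry M) (Measure.count.prod ν) :=
    integrable_count_prod_of_nonneg hMm (fun i y => (hM i y).le) hMi hMsum
  have hf2i : Integrable (fun x => Function.uncurry f x ^ 2 / Function.uncurry M x)
      (Measure.count.prod ν) :=
    integrable_count_prod_of_nonneg (h := fun i y => f i y ^ 2 / M i y)
      (fun i => ((hfm i).pow_const 2).div (hMm i))
      (fun i y => div_nonneg (sq_nonneg _) (hM i y).le) hf2 hf2sum
  have hfi : Integrable (Function.uncurry f) (Measure.count.prod ν) :=
    integrable_of_integrable_sq_div (fun x => hM _ _) hMi'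
      (measurable_from_prod_countable_right hfm).aestronglyMeasurable hf2i
  have hcoll : ∀ i y, ∑' j, ∫ y', k i j y y' * (M i y * f j y' - M j y' * f i y) ∂ν =
      collisionOperator (Measure.count.prod ν) a (Function.uncurry M) (Function.uncurry f)
        (i, y) := fun i y =>
    (integral_count_prod (integrable_collision_integrand ha ha_bdd hMi' hfi (i, y))).symm
  have hcoer := mul_integral_sq_sub_div_le_neg_integral_collisionOperator
    (M := Function.uncurry M) (f := Function.uncurry f) ha ha_bdd (fun x x' => hk_sym _ _ _ _)
    (fun x x' => hk_ge _ _ _ _) (fun x => hM _ _) hMi' ((integral_count_prod hMi').trans hM1)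
    hfi hf2i
  rw [integral_count_prod hfi, integral_count_prod (integrable_sq_sub_mul_div hM' hMi' hfi hf2i _),
    integral_count_prod (integrable_collisionOperator_mul_div ha ha_bdd hM' hMi' hfi hf2i)]
    at hcoer
  simpa only [hcoll, Function.uncurry_apply_pair] using hcoer

end CountableProd

noncomputable def maxwellian (m e Z p : ℝ) : ℝ :=
  exp (-(p ^ 2 / (2 * m) + e)) / (sqrt (2 * π * m) * Z)

lemma maxwellian_pos {m Z : ℝ} (hm : 0 < m) (hZ : 0 < Z) (e p : ℝ) : 0 < maxwellian m e Z p := by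
  unfold maxwellian
  positivity

lemma measurable_maxwellian (m e Z : ℝ) : Measurable (maxwellian m e Z) := by
  unfold maxwellian
  fun_prop

lemma integrable_maxwellian {m : ℝ} (hm : 0 < m) (e Z : ℝ) : Integrable (maxwellian m e Z) := by
  have h : maxwellian m e Z =
      fun p => exp (-(1 / (2 * m)) * p ^ 2) * (exp (-e) / (sqrt (2 * π * m) * Z)) := by
    funext p
    rw [maxwellian, ← mul_div_assoc, ← exp_add]
    congr 2
    ring
  rw [h]
  exact (integrable_exp_neg_mul_sq (by positivity)).mul_const _

theorem stmt6_general
    (m ε : ℕ → ℝ)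
    (hm : ∀ n, 0 < m n)
    (hε : Summable fun n => Real.exp (-ε n))
    (Z : ℝ) (hZ : Z = ∑' n, Real.exp (-ε n))
    (M : ℕ → ℝ → ℝ)
    (hM : ∀ n p, M n p =
      Real.exp (-(p ^ 2 / (2 * m n) + ε n)) / (Real.sqrt (2 * Real.pi * m n) * Z))
    (hMnorm : (∑' n, ∫ p, M n p) = 1)
    (α : ℕ → ℕ → ℝ → ℝ → ℝ)
    (hαmeas : ∀ n n', Measurable fun q : ℝ × ℝ => α n n' q.1 q.2)
    (α₁ α₂ : ℝ) (hα₁ : 0 < α₁)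
    (hsym : ∀ n n' p p', α n n' p p' = α n' n p' p)
    (hbd : ∀ n n' p p', α₁ ≤ α n n' p p' ∧ α n n' p p' ≤ α₂)
    (Q : (ℕ → ℝ → ℝ) → ℕ → ℝ → ℝ)
    (hQ : ∀ f n p, Q f n p =
      ∑' n', ∫ p', α n n' p p' * (M n p * f n' p' - M n' p' * f n p))
    (memL2M : (ℕ → ℝ → ℝ) → Prop)
    (hmem : ∀ f, memL2M f ↔ (∀ n, Measurable (f n)) ∧
      (∀ n, Integrable fun p => f n p ^ 2 / M n p) ∧
      (Summable fun n => ∫ p, f n p ^ 2 / M n p)) :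
    ∀ f, memL2M f → ∀ Ns : ℝ, Ns = (∑' n, ∫ p, f n p) →
      α₁ * (∑' n, ∫ p, (f n p - Ns * M n p) ^ 2 / M n p) ≤
          -(∑' n, ∫ p, Q f n p * f n p / M n p) ∧
      (∑' n, ∫ p, Q f n p * f n p / M n p) ≤ 0 := by
  intro f hf Ns hNs
  obtain ⟨hfm, hf2, hf2sum⟩ := (hmem f).1 hf
  have hZpos : 0 < Z := hZ ▸ hε.tsum_pos (fun n => (exp_pos _).le) 0 (exp_pos _)
  have hMeq : ∀ n, M n = maxwellian (m n) (ε n) Z := fun n => funext (hM n)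
  have hMpos : ∀ n p, 0 < M n p := fun n p => hMeq n ▸ maxwellian_pos (hm n) hZpos _ _
  have hα_bdd : ∀ n n' p p', ‖α n n' p p'‖ ≤ α₂ := fun n n' p p' => by
    rw [norm_of_nonneg (hα₁.le.trans (hbd n n' p p').1)]
    exact (hbd n n' p p').2
  have hcoer := mul_tsum_integral_sq_sub_div_le_neg_tsum_collision hαmeas hsym hα_bdd
    (fun n n' p p' => (hbd n n' p p').1) hMpos (fun n => hMeq n ▸ measurable_maxwellian _ _ _)
    (fun n => hMeq n ▸ integrable_maxwellian (hm n) _ _) hMnorm hfm hf2 hf2sum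
  simp only [← hQ, ← hNs] at hcoer
  have hT : 0 ≤ ∑' n, ∫ p, (f n p - Ns * M n p) ^ 2 / M n p :=
    tsum_nonneg fun n => integral_nonneg fun p => div_nonneg (sq_nonneg _) (hMpos n p).le
  exact ⟨hcoer, by linarith [mul_nonneg hα₁.le hT]⟩

theorem stmt6
    (m ε : ℕ → ℝ)
    (hm : ∀ n, 0 < m n)
    (hε : Summable fun n => Real.exp (-ε n))
    (Z : ℝ) (hZ : Z = ∑' n, Real.exp (-ε n))
    (M : ℕ → ℝ → ℝ)
    (hM : ∀ n p, M n p =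
      Real.exp (-(p ^ 2 / (2 * m n) + ε n)) / (Real.sqrt (2 * Real.pi * m n) * Z))
    (hMnorm : (∑' n, ∫ p, M n p) = 1)
    (α : ℕ → ℕ → ℝ → ℝ → ℝ)
    (hαmeas : ∀ n n', Measurable fun q : ℝ × ℝ => α n n' q.1 q.2)
    (α₁ α₂ : ℝ) (hα₁ : 0 < α₁) (hα₁₂ : α₁ ≤ α₂)
    (hsym : ∀ n n' p p', α n n' p p' = α n' n p' p)
    (hbd : ∀ n n' p p', α₁ ≤ α n n' p p' ∧ α n n' p p' ≤ α₂)
    (Q : (ℕ → ℝ → ℝ) → ℕ → ℝ → ℝ)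
    (hQ : ∀ f n p, Q f n p =
      ∑' n', ∫ p', α n n' p p' * (M n p * f n' p' - M n' p' * f n p))
    (memL2M : (ℕ → ℝ → ℝ) → Prop)
    (hmem : ∀ f, memL2M f ↔ (∀ n, Measurable (f n)) ∧
      (∀ n, Integrable fun p => f n p ^ 2 / M n p) ∧
      (Summable fun n => ∫ p, f n p ^ 2 / M n p))
    (nrm : (ℕ → ℝ → ℝ) → ℝ)
    (hnrm : ∀ f, nrm f = (∑' n, ∫ p, f n p ^ 2 / M n p) ^ ((1 : ℝ) / 2)) :
    ∀ f, memL2M f → ∀ Ns : ℝ, Ns = (∑' n, ∫ p, f n p) →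
      α₁ * (∑' n, ∫ p, (f n p - Ns * M n p) ^ 2 / M n p) ≤
          -(∑' n, ∫ p, Q f n p * f n p / M n p) ∧
      (∑' n, ∫ p, Q f n p * f n p / M n p) ≤ 0 :=
  stmt6_general m ε hm hε Z hZ M hM hMnorm α hαmeas α₁ α₂ hα₁ hsym hbd Q hQ memL2M hmem
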